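/- Let E be a two-type unbalanced non-trivial linear economy with atom A1 of type one and type-two consumers T \ A1, and let x* be the allocation equal to x*_1 on A1 and x*_2 on T \ A1, where (x*_1, x*_2) maximizes a1·x1 over X = {(x1, x2) ∈ ℝ^l_+ × ℝ^l_+ : μ(A1)x1 + μ(T \ A1)x2 ≤ μ(A1)ω1 + μ(T \ A1)ω2 componentwise, a2·x2 = a2·ω2}. If a coalition S blocks x*, then μ(S ∩ A1) > 0 (the atom A1 belongs to S up to null sets) and μ(S \ A1) > 0 (a non-null set of type-two consumers belongs to S). -/

import Mathlib

open MeasureTheory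
open scoped Classical

noncomputable section

/-- Dot product of two vectors in `ℝ^l`. -/
def dotp {l : ℕ} (a x : Fin l → ℝ) : ℝ := ∑ i, a i * x i

/-- An allocation: an integrable function into the nonnegative orthant. -/
def IsAllocation {T : Type*} [MeasurableSpace T] {l : ℕ} (μ : Measure T)
    (x : T → Fin l → ℝ) : Prop :=
  Integrable x μ ∧ ∀ t, 0 ≤ x t

/-- Initial endowment in a two-type economy: `ω1` for consumers in `A1`, `ω2` otherwise. -/
def endow {T : Type*} {l : ℕ} (A1 : Set T) (ω1 ω2 : Fin l → ℝ) (t : T) : Fin l → ℝ :=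
  if t ∈ A1 then ω1 else ω2

/-- Utility vectors in a two-type linear economy: `a1` for consumers in `A1`, `a2` otherwise. -/
def util {T : Type*} {l : ℕ} (A1 : Set T) (a1 a2 : Fin l → ℝ) (t : T) : Fin l → ℝ :=
  if t ∈ A1 then a1 else a2

/-- A feasible allocation. -/
def Feasible {T : Type*} [MeasurableSpace T] {l : ℕ} (μ : Measure T)
    (A1 : Set T) (ω1 ω2 : Fin l → ℝ) (x : T → Fin l → ℝ) : Prop :=
  (∫ t, x t ∂μ) = ∫ t, endow A1 ω1 ω2 t ∂μ

/-- Coalition `S` blocks the allocation `x` in the two-type linear economy. -/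
def Blocks {T : Type*} [MeasurableSpace T] {l : ℕ} (μ : Measure T)
    (A1 : Set T) (a1 a2 ω1 ω2 : Fin l → ℝ) (S : Set T) (x : T → Fin l → ℝ) : Prop :=
  MeasurableSet S ∧ 0 < μ S ∧ ∃ y : T → Fin l → ℝ, IsAllocation μ y ∧
    (∫ t in S, y t ∂μ) = (∫ t in S, endow A1 ω1 ω2 t ∂μ) ∧
    ∀ t ∈ S, dotp (util A1 a1 a2 t) (x t) < dotp (util A1 a1 a2 t) (y t)

/-- Membership in the core `C(E)`: feasible and blocked by no coalition. -/
def InCore {T : Type*} [MeasurableSpace T] {l : ℕ} (μ : Measure T)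
    (A1 : Set T) (a1 a2 ω1 ω2 : Fin l → ℝ) (x : T → Fin l → ℝ) : Prop :=
  IsAllocation μ x ∧ Feasible μ A1 ω1 ω2 x ∧
    ∀ S : Set T, ¬ Blocks μ A1 a1 a2 ω1 ω2 S x

/-- `(p, x)` is a competitive equilibrium of the two-type linear economy. -/
def IsCompEquil {T : Type*} [MeasurableSpace T] {l : ℕ} (μ : Measure T)
    (A1 : Set T) (a1 a2 ω1 ω2 : Fin l → ℝ) (p : Fin l → ℝ) (x : T → Fin l → ℝ) : Prop :=
  0 ≤ p ∧ IsAllocation μ x ∧ Feasible μ A1 ω1 ω2 x ∧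
    ∀ᵐ t ∂μ, dotp p (x t) ≤ dotp p (endow A1 ω1 ω2 t) ∧
      ∀ y : Fin l → ℝ, 0 ≤ y →
        dotp (util A1 a1 a2 t) (x t) < dotp (util A1 a1 a2 t) y →
        dotp p (endow A1 ω1 ω2 t) < dotp p y

/-- `x` is a competitive allocation, i.e. belongs to `W(E)`. -/
def InW {T : Type*} [MeasurableSpace T] {l : ℕ} (μ : Measure T)
    (A1 : Set T) (a1 a2 ω1 ω2 : Fin l → ℝ) (x : T → Fin l → ℝ) : Prop :=
  ∃ p : Fin l → ℝ, IsCompEquil μ A1 a1 a2 ω1 ω2 p x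

/-- Non-triviality: the initial allocation is not Pareto optimal, i.e. there is a
feasible allocation strictly preferred by every consumer. -/
def NonTrivial {T : Type*} [MeasurableSpace T] {l : ℕ} (μ : Measure T)
    (A1 : Set T) (a1 a2 ω1 ω2 : Fin l → ℝ) : Prop :=
  ∃ y : T → Fin l → ℝ, IsAllocation μ y ∧ Feasible μ A1 ω1 ω2 y ∧
    ∀ t, dotp (util A1 a1 a2 t) (endow A1 ω1 ω2 t) < dotp (util A1 a1 a2 t) (y t)

/-- `dotp a` as a continuous linear map. -/
def dotpCLM {l : ℕ} (a : Fin l → ℝ) : (Fin l → ℝ) →L[ℝ] ℝ :=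
  LinearMap.toContinuousLinearMap
    { toFun := fun x => dotp a x
      map_add' := fun x y => by simp [dotp, mul_add, Finset.sum_add_distrib]
      map_smul' := fun r x => by
        simp [dotp, Finset.mul_sum, mul_left_comm] }

lemma dotp_smul {l : ℕ} (a : Fin l → ℝ) (r : ℝ) (x : Fin l → ℝ) :
    dotp a (r • x) = r * dotp a x := by
  simp [dotp, Finset.mul_sum, mul_left_comm]

lemma integral_dotp {T : Type*} [MeasurableSpace T] {l : ℕ} (ν : Measure T)
    (a : Fin l → ℝ) (y : T → Fin l → ℝ) (hy : Integrable y ν) :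
    ∫ t, dotp a (y t) ∂ν = dotp a (∫ t, y t ∂ν) := by
  have := (dotpCLM a).integral_comp_comm hy
  exact this

lemma integrable_dotp {T : Type*} [MeasurableSpace T] {l : ℕ} (ν : Measure T)
    (a : Fin l → ℝ) (y : T → Fin l → ℝ) (hy : Integrable y ν) :
    Integrable (fun t => dotp a (y t)) ν := by
  have := (dotpCLM a).integrable_comp hy
  exact this

lemma strict_int {T : Type*} [MeasurableSpace T] (ν : Measure T) [IsFiniteMeasure ν]
    (hν : ν Set.univ ≠ 0) (f : T → ℝ) (hf : Integrable f ν) (c : ℝ)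
    (h : ∀ᵐ t ∂ν, c < f t) : c * (ν Set.univ).toReal < ∫ t, f t ∂ν := by
  have hg : Integrable (fun t => f t - c) ν := hf.sub (integrable_const c)
  have hnn : 0 ≤ᵐ[ν] fun t => f t - c := h.mono fun t ht => by simp; linarith
  have hge : 0 ≤ ∫ t, f t - c ∂ν := integral_nonneg_of_ae hnn
  have hne : ∫ t, f t - c ∂ν ≠ 0 := by
    intro h0
    have hz := (integral_eq_zero_iff_of_nonneg_ae hnn hg).mp h0
    have hFalse : ∀ᵐ t ∂ν, False := by
      filter_upwards [h, hz] with t h1 h2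
      simp at h2; linarith
    rw [ae_iff] at hFalse
    simp at hFalse
    exact hν (by simp [hFalse])
  have hpos : 0 < ∫ t, f t - c ∂ν := lt_of_le_of_ne hge (Ne.symm hne)
  have := integral_sub hf (integrable_const c)
  rw [this, integral_const] at hpos
  simp only [smul_eq_mul] at hpos
  rw [show ν.real Set.univ = (ν Set.univ).toReal from rfl] at hpos
  linarith [hpos]

/-- If a coalition `S` blocks the core-candidate allocation `x*` built
from a maximizer `(x*₁, x*₂)`, then `S` contains the atom `A1` (up to null sets) and a
non-null set of type-two consumers. -/
theorem blocking_coalition_contains_atom_and_type_two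
    {T : Type*} [MeasurableSpace T] (μ : Measure T) [IsFiniteMeasure μ]
    {l : ℕ} (hl : 1 ≤ l)
    (a1 a2 : Fin l → ℝ) (ha1pos : ∀ i, 0 < a1 i) (ha2pos : ∀ i, 0 < a2 i)
    (ha1sum : ∑ i, a1 i = 1) (ha2sum : ∑ i, a2 i = 1) (hne : a1 ≠ a2)
    (A1 : Set T) (hA1meas : MeasurableSet A1) (hA1pos : 0 < μ A1)
    (hA1atom : ∀ B : Set T, MeasurableSet B → B ⊆ A1 → μ B = 0 ∨ μ B = μ A1)
    (hcompl : 0 < μ A1ᶜ)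
    (ω1 ω2 : Fin l → ℝ) (hω1 : 0 ≤ ω1) (hω2 : 0 ≤ ω2)
    (hnontriv : NonTrivial μ A1 a1 a2 ω1 ω2)
    (x1s x2s : Fin l → ℝ) (hx1s : 0 ≤ x1s) (hx2s : 0 ≤ x2s)
    (hfeas : (μ A1).toReal • x1s + (μ A1ᶜ).toReal • x2s ≤
      (μ A1).toReal • ω1 + (μ A1ᶜ).toReal • ω2)
    (hindiff : dotp a2 x2s = dotp a2 ω2)
    (hmax : ∀ x1 x2 : Fin l → ℝ, 0 ≤ x1 → 0 ≤ x2 →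
      (μ A1).toReal • x1 + (μ A1ᶜ).toReal • x2 ≤
        (μ A1).toReal • ω1 + (μ A1ᶜ).toReal • ω2 →
      dotp a2 x2 = dotp a2 ω2 → dotp a1 x1 ≤ dotp a1 x1s)
    (S : Set T) (hblocks : Blocks μ A1 a1 a2 ω1 ω2 S (endow A1 x1s x2s)) :
    0 < μ (S ∩ A1) ∧ 0 < μ (S \ A1) := by
  obtain ⟨hS, hSpos, y, ⟨hyint, hypos⟩, hyeq, hlt⟩ := hblocks
  have hmem : ∀ᵐ t ∂μ.restrict S, t ∈ S := ae_restrict_mem hS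
  constructor
  · -- μ (S ∩ A1) > 0
    by_contra h0'
    have h0 : μ (S ∩ A1) = 0 := by
      simpa using (not_lt.mp h0').antisymm zero_le
    have hAe : ∀ᵐ t ∂μ.restrict S, t ∉ A1 := by
      rw [ae_iff]
      have : {t : T | ¬ t ∉ A1} = A1 := by ext t; simp
      rw [this, Measure.restrict_apply hA1meas, Set.inter_comm]
      exact h0
    have hend : (∫ t in S, endow A1 ω1 ω2 t ∂μ) = (μ S).toReal • ω2 := by
      have heq : (fun t => endow A1 ω1 ω2 t) =ᵐ[μ.restrict S] fun _ => ω2 :=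
        hAe.mono fun t ht => by simp [endow, ht]
      rw [integral_congr_ae heq, integral_const]
      simp
      rfl
    have hkey : ∫ t in S, dotp a2 (y t) ∂μ = (μ S).toReal * dotp a2 ω2 := by
      rw [integral_dotp _ a2 y hyint.restrict, hyeq, hend, dotp_smul]
    have hstrict := strict_int (μ.restrict S)
      (by simpa using hSpos.ne') (fun t => dotp a2 (y t))
      (integrable_dotp _ a2 y hyint.restrict) (dotp a2 ω2)
      (by
        filter_upwards [hmem, hAe] with t htS htA
        have := hlt t htS
        simp only [util, endow, if_neg htA] at this
        rw [← hindiff]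
        exact this)
    rw [hkey] at hstrict
    simp [Measure.restrict_apply_univ, mul_comm] at hstrict
  · -- μ (S \ A1) > 0
    by_contra h0'
    have h0 : μ (S \ A1) = 0 := by
      simpa using (not_lt.mp h0').antisymm zero_le
    have hAe : ∀ᵐ t ∂μ.restrict S, t ∈ A1 := by
      rw [ae_iff]
      have : {t : T | ¬ t ∈ A1} = A1ᶜ := rfl
      rw [this, Measure.restrict_apply hA1meas.compl, Set.inter_comm]
      simpa [Set.diff_eq] using h0
    have hSA : μ (S ∩ A1) = μ S := by
      have := measure_inter_add_diff S hA1meas (μ := μ)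
      rw [h0, add_zero] at this
      exact this
    have hSApos : μ (S ∩ A1) ≠ 0 := by rw [hSA]; exact hSpos.ne'
    have hSeq : μ S = μ A1 := by
      rcases hA1atom (S ∩ A1) (hS.inter hA1meas) Set.inter_subset_right with h | h
      · exact absurd h hSApos
      · rw [← hSA, h]
    have hend : (∫ t in S, endow A1 ω1 ω2 t ∂μ) = (μ S).toReal • ω1 := by
      have heq : (fun t => endow A1 ω1 ω2 t) =ᵐ[μ.restrict S] fun _ => ω1 :=
        hAe.mono fun t ht => by simp [endow, ht]
      rw [integral_congr_ae heq, integral_const]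
      simp
      rfl
    have hkey : ∫ t in S, dotp a1 (y t) ∂μ = (μ S).toReal * dotp a1 ω1 := by
      rw [integral_dotp _ a1 y hyint.restrict, hyeq, hend, dotp_smul]
    have hstrict := strict_int (μ.restrict S)
      (by simpa using hSpos.ne') (fun t => dotp a1 (y t))
      (integrable_dotp _ a1 y hyint.restrict) (dotp a1 x1s)
      (by
        filter_upwards [hmem, hAe] with t htS htA
        have := hlt t htS
        simpa only [util, endow, if_pos htA] using this)
    rw [hkey] at hstrict
    simp only [Measure.restrict_apply_univ] at hstrict
    have htR : 0 < (μ S).toReal :=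
      ENNReal.toReal_pos hSpos.ne' (measure_ne_top μ S)
    have h1 : dotp a1 x1s < dotp a1 ω1 := by
      nlinarith [hstrict, htR]
    have h2 : dotp a1 ω1 ≤ dotp a1 x1s :=
      hmax ω1 ω2 hω1 hω2 (le_refl _) rfl
    linarith
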